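/- Let n ≥ 3, f ≥ 1 and s, m ≥ 0 be integers. Then, with g = h = k = 0, p(n,s,m,f=,0=,0=,0=) = Σ_{y ∈ Y} w(f,0,0;y) · p(n−yf, s, m, min{n−yf−1, f−1}≤, s≤, m≤, m≤). (Paper's Lemma 2(i).) -/

import Mathlib

/-!
In a tree counted by `p(n,s,m,f=,0=,0=,0=)`, the conditions `Max_s = Max_m = Max_l = 0` say exactly
that the root subtrees with the maximal number `f` of vertices carry no self-loops and no multiple
edges and hang from the root by simple edges; they say nothing about the smaller root subtrees.
Cutting off the `y ≥ 1` maximal subtrees therefore leaves a tree of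
`𝒫(n-yf, s, m, min{n-yf-1, f-1}≤, s≤, m≤, m≤)`, and grafting any multiset of `y` trees of
`𝒫(f,0,0,(f-1)≤,0≤,0≤,0≤)` onto such a tree by simple edges inverts the cut. So the trees with `y`
maximal subtrees are counted by a product, and summing over `y` gives the formula.
-/

/-- Rooted tree-like multigraph (list-based representative): a root carrying a
self-loop count together with a list of children, each child being a pair of an
edge multiplicity (number of multiple edges, i.e. copies beyond the first, of the
edge joining the root to the child's root) and a rooted tree-like multigraph. -/
inductive PreRTM : Type where
  | node : ℕ → List (ℕ × PreRTM) → PreRTM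

namespace PreRTM

/-- self-loop count of the root -/
def loops : PreRTM → ℕ
  | .node l _ => l

/-- the children of the root -/
def children : PreRTM → List (ℕ × PreRTM)
  | .node _ cs => cs

/-- number of vertices -/
def vcount : PreRTM → ℕ
  | .node _ cs => 1 + (cs.attach.map (fun c => vcount c.1.2)).sum
decreasing_by
  rcases c with ⟨⟨e, Q⟩, hc⟩
  have h1 := List.sizeOf_lt_of_mem hc
  simp only [Prod.mk.sizeOf_spec, PreRTM.node.sizeOf_spec] at *
  omega

/-- total number of self-loops -/
def scount : PreRTM → ℕ
  | .node l cs => l + (cs.attach.map (fun c => scount c.1.2)).sum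
decreasing_by
  rcases c with ⟨⟨e, Q⟩, hc⟩
  have h1 := List.sizeOf_lt_of_mem hc
  simp only [Prod.mk.sizeOf_spec, PreRTM.node.sizeOf_spec] at *
  omega

/-- total number of multiple edges -/
def ecount : PreRTM → ℕ
  | .node _ cs => (cs.attach.map (fun c => c.1.1 + ecount c.1.2)).sum
decreasing_by
  rcases c with ⟨⟨e, Q⟩, hc⟩
  have h1 := List.sizeOf_lt_of_mem hc
  simp only [Prod.mk.sizeOf_spec, PreRTM.node.sizeOf_spec] at *
  omega

/-- Max_v: maximum number of vertices in a descendant subtree of the root (0 if none) -/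
def maxV (P : PreRTM) : ℕ :=
  (P.children.map (fun c => c.2.vcount)).foldr max 0

/-- Max_s: maximum number of self-loops among descendant subtrees with `vcount = maxV` -/
def maxS (P : PreRTM) : ℕ :=
  (((P.children.filter (fun c => c.2.vcount == P.maxV)).map (fun c => c.2.scount)).foldr max 0)

/-- Max_m: maximum number of multiple edges among descendant subtrees with `vcount = maxV` -/
def maxM (P : PreRTM) : ℕ :=
  (((P.children.filter (fun c => c.2.vcount == P.maxV)).map (fun c => c.2.ecount)).foldr max 0)

/-- Max_l: maximum multiplicity of the root edge among descendant subtrees with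
`vcount = maxV` and `ecount = maxM` -/
def maxL (P : PreRTM) : ℕ :=
  (((P.children.filter (fun c => c.2.vcount == P.maxV && c.2.ecount == P.maxM)).map
      (fun c => c.1)).foldr max 0)

mutual
  /-- root-preserving isomorphism: equal root self-loop counts and equal multisets of children -/
  inductive REquiv : PreRTM → PreRTM → Prop where
    | node (l : ℕ) {cs cs' : List (ℕ × PreRTM)} :
        LEquiv cs cs' → REquiv (.node l cs) (.node l cs')
  /-- lists of children agree as multisets, up to `REquiv` of the subtrees -/
  inductive LEquiv : List (ℕ × PreRTM) → List (ℕ × PreRTM) → Prop where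
    | nil : LEquiv [] []
    | cons {e : ℕ} {P Q : PreRTM} {l₁ l₂ : List (ℕ × PreRTM)} :
        REquiv P Q → LEquiv l₁ l₂ → LEquiv ((e, P) :: l₁) ((e, Q) :: l₂)
    | swap (a b : ℕ × PreRTM) (l : List (ℕ × PreRTM)) : LEquiv (a :: b :: l) (b :: a :: l)
    | trans {l₁ l₂ l₃ : List (ℕ × PreRTM)} : LEquiv l₁ l₂ → LEquiv l₂ l₃ → LEquiv l₁ l₃
end

end PreRTM

/-- Rooted tree-like multigraphs, up to root-preserving isomorphism. -/
def RTM : Type := Quot PreRTM.REquiv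

/-- the isomorphism class of a representative -/
def cls (P : PreRTM) : RTM := Quot.mk PreRTM.REquiv P

namespace PreRTM

/-- `P` has `n` vertices, `s` self-loops and `m` multiple edges -/
def memP (n s m : ℤ) (P : PreRTM) : Prop :=
  (P.vcount : ℤ) = n ∧ (P.scount : ℤ) = s ∧ (P.ecount : ℤ) = m

/-- membership in 𝒫(n,s,m,f≤,g≤,h≤,k≤) -/
def memLLLL (n s m f g h k : ℤ) (P : PreRTM) : Prop :=
  memP n s m P ∧ (P.maxV : ℤ) ≤ f ∧ (P.maxS : ℤ) ≤ g ∧ (P.maxM : ℤ) ≤ h ∧ (P.maxL : ℤ) ≤ k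

/-- membership in 𝒫(n,s,m,f=,g≤,h≤,k≤) -/
def memELLL (n s m f g h k : ℤ) (P : PreRTM) : Prop :=
  memLLLL n s m f g h k P ∧ (P.maxV : ℤ) = f

/-- membership in 𝒫(n,s,m,f=,g=,h≤,k≤) -/
def memEELL (n s m f g h k : ℤ) (P : PreRTM) : Prop :=
  memELLL n s m f g h k P ∧ (P.maxS : ℤ) = g

/-- membership in 𝒫(n,s,m,f=,g=,h=,k≤) -/
def memEEEL (n s m f g h k : ℤ) (P : PreRTM) : Prop :=
  memEELL n s m f g h k P ∧ (P.maxM : ℤ) = h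

/-- membership in 𝒫(n,s,m,f=,g=,h=,k=) -/
def memEEEE (n s m f g h k : ℤ) (P : PreRTM) : Prop :=
  memEEEL n s m f g h k P ∧ (P.maxL : ℤ) = k

end PreRTM

/-- the family 𝒫(n,s,m,f≤,g≤,h≤,k≤) of isomorphism classes -/
def famLLLL (n s m f g h k : ℤ) : Set RTM := cls '' {P | P.memLLLL n s m f g h k}
/-- the family 𝒫(n,s,m,f=,g≤,h≤,k≤) of isomorphism classes -/
def famELLL (n s m f g h k : ℤ) : Set RTM := cls '' {P | P.memELLL n s m f g h k}
/-- the family 𝒫(n,s,m,f=,g=,h≤,k≤) of isomorphism classes -/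
def famEELL (n s m f g h k : ℤ) : Set RTM := cls '' {P | P.memEELL n s m f g h k}
/-- the family 𝒫(n,s,m,f=,g=,h=,k≤) of isomorphism classes -/
def famEEEL (n s m f g h k : ℤ) : Set RTM := cls '' {P | P.memEEEL n s m f g h k}
/-- the family 𝒫(n,s,m,f=,g=,h=,k=) of isomorphism classes -/
def famEEEE (n s m f g h k : ℤ) : Set RTM := cls '' {P | P.memEEEE n s m f g h k}

/-- p(n,s,m,f≤,g≤,h≤,k≤) -/
noncomputable def pLLLL (n s m f g h k : ℤ) : ℕ := (famLLLL n s m f g h k).ncard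
/-- p(n,s,m,f=,g≤,h≤,k≤) -/
noncomputable def pELLL (n s m f g h k : ℤ) : ℕ := (famELLL n s m f g h k).ncard
/-- p(n,s,m,f=,g=,h≤,k≤) -/
noncomputable def pEELL (n s m f g h k : ℤ) : ℕ := (famEELL n s m f g h k).ncard
/-- p(n,s,m,f=,g=,h=,k≤) -/
noncomputable def pEEEL (n s m f g h k : ℤ) : ℕ := (famEEEL n s m f g h k).ncard
/-- p(n,s,m,f=,g=,h=,k=) -/
noncomputable def pEEEE (n s m f g h k : ℤ) : ℕ := (famEEEE n s m f g h k).ncard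

/-- w(f,g,h;z) = C(p(f,g,h,(f−1)≤,g≤,h≤,h≤) + z − 1, z) -/
noncomputable def w (f g h : ℤ) (z : ℕ) : ℕ :=
  (pLLLL f g h (f - 1) g h h + z - 1).choose z

/-- the index set Y : integers y with 1 ≤ y ≤ ⌊(n−1)/f⌋, additionally y ≤ ⌊s/g⌋ when g ≥ 1
and y ≤ ⌊m/(h+k)⌋ when h+k ≥ 1 -/
noncomputable def Yset (n s m f g h k : ℤ) : Finset ℤ :=
  (Finset.Icc 1 ((n - 1) / f)).filter
    (fun y => (1 ≤ g → y ≤ s / g) ∧ (1 ≤ h + k → y ≤ m / (h + k)))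

namespace PreRTM

mutual
theorem REquiv.refl : ∀ P : PreRTM, REquiv P P
  | .node l cs => .node l (LEquiv.refl cs)
theorem LEquiv.refl : ∀ cs : List (ℕ × PreRTM), LEquiv cs cs
  | [] => .nil
  | (_, P) :: cs => .cons (REquiv.refl P) (LEquiv.refl cs)
end

mutual
theorem REquiv.symm : ∀ {P Q : PreRTM}, REquiv P Q → REquiv Q P
  | _, _, .node l h => .node l (LEquiv.symm h)
theorem LEquiv.symm : ∀ {cs cs' : List (ℕ × PreRTM)}, LEquiv cs cs' → LEquiv cs' cs
  | _, _, .nil => .nil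
  | _, _, .cons h₁ h₂ => .cons (REquiv.symm h₁) (LEquiv.symm h₂)
  | _, _, .swap a b l => .swap b a l
  | _, _, .trans h₁ h₂ => .trans (LEquiv.symm h₂) (LEquiv.symm h₁)
end

theorem REquiv.trans {P Q R : PreRTM} : REquiv P Q → REquiv Q R → REquiv P R
  | .node l h₁, .node _ h₂ => .node l (.trans h₁ h₂)

theorem REquiv.equivalence : Equivalence REquiv :=
  ⟨REquiv.refl, REquiv.symm, REquiv.trans⟩

theorem cls_eq_cls_iff {P Q : PreRTM} : cls P = cls Q ↔ REquiv P Q :=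
  ⟨fun h => REquiv.equivalence.eqvGen_iff.1 (Quot.eq.1 h), Quot.sound⟩

mutual
theorem REquiv.additive_eq {β : Type*} [AddCommMonoid β] (F : PreRTM → β) (a : ℕ → β)
    (g : ℕ → β → β) (hF : ∀ l cs, F (.node l cs) = a l + (cs.map fun c => g c.1 (F c.2)).sum) :
    ∀ {P Q : PreRTM}, REquiv P Q → F P = F Q
  | _, _, .node _ h => by rw [hF, hF, LEquiv.additive_eq F a g hF h]
theorem LEquiv.additive_eq {β : Type*} [AddCommMonoid β] (F : PreRTM → β) (a : ℕ → β)
    (g : ℕ → β → β) (hF : ∀ l cs, F (.node l cs) = a l + (cs.map fun c => g c.1 (F c.2)).sum) :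
    ∀ {cs cs' : List (ℕ × PreRTM)}, LEquiv cs cs' →
      (cs.map fun c => g c.1 (F c.2)).sum = (cs'.map fun c => g c.1 (F c.2)).sum
  | _, _, .nil => rfl
  | _, _, .cons h₁ h₂ => by
    simp only [List.map_cons, List.sum_cons, REquiv.additive_eq F a g hF h₁,
      LEquiv.additive_eq F a g hF h₂]
  | _, _, .swap _ _ _ => by simp only [List.map_cons, List.sum_cons, add_left_comm]
  | _, _, .trans h₁ h₂ => (LEquiv.additive_eq F a g hF h₁).trans (LEquiv.additive_eq F a g hF h₂)
end

theorem vcount_node (l : ℕ) (cs : List (ℕ × PreRTM)) :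
    vcount (.node l cs) = 1 + (cs.map fun c => vcount c.2).sum := by
  rw [vcount, List.attach_map_val (l := cs) (f := fun c : ℕ × PreRTM => vcount c.2)]

theorem scount_node (l : ℕ) (cs : List (ℕ × PreRTM)) :
    scount (.node l cs) = l + (cs.map fun c => scount c.2).sum := by
  rw [scount, List.attach_map_val (l := cs) (f := fun c : ℕ × PreRTM => scount c.2)]

theorem ecount_node (l : ℕ) (cs : List (ℕ × PreRTM)) :
    ecount (.node l cs) = (cs.map fun c => c.1 + ecount c.2).sum := by
  rw [ecount, List.attach_map_val (l := cs) (f := fun c : ℕ × PreRTM => c.1 + ecount c.2)]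

theorem REquiv.vcount_eq {P Q : PreRTM} (h : REquiv P Q) : P.vcount = Q.vcount :=
  h.additive_eq vcount (fun _ => 1) (fun _ k => k) vcount_node

theorem REquiv.scount_eq {P Q : PreRTM} (h : REquiv P Q) : P.scount = Q.scount :=
  h.additive_eq scount id (fun _ k => k) scount_node

theorem REquiv.ecount_eq {P Q : PreRTM} (h : REquiv P Q) : P.ecount = Q.ecount :=
  h.additive_eq ecount 0 (· + ·) (by simpa using ecount_node)

theorem REquiv.loops_eq {P Q : PreRTM} : REquiv P Q → P.loops = Q.loops
  | .node _ _ => rfl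

def childClasses (P : PreRTM) : Multiset (ℕ × RTM) :=
  (P.children.map fun c => (c.1, cls c.2) : List (ℕ × RTM))

theorem LEquiv.childClasses_eq : ∀ {cs cs' : List (ℕ × PreRTM)}, LEquiv cs cs' →
    ((cs.map fun c => (c.1, cls c.2) : List (ℕ × RTM)) : Multiset (ℕ × RTM)) =
      (cs'.map fun c => (c.1, cls c.2) : List (ℕ × RTM))
  | _, _, .nil => rfl
  | _, _, .cons h₁ h₂ => by
    simp only [List.map_cons, ← Multiset.cons_coe, LEquiv.childClasses_eq h₂,
      cls_eq_cls_iff.2 h₁]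
  | _, _, .swap _ _ _ => by simp only [List.map_cons, ← Multiset.cons_coe, Multiset.cons_swap]
  | _, _, .trans h₁ h₂ => h₁.childClasses_eq.trans h₂.childClasses_eq

theorem REquiv.childClasses_eq {P Q : PreRTM} : REquiv P Q → P.childClasses = Q.childClasses
  | .node _ h => h.childClasses_eq

theorem LEquiv.of_perm {cs cs' : List (ℕ × PreRTM)} (h : cs.Perm cs') : LEquiv cs cs' := by
  induction h with
  | nil => exact .nil
  | cons _ _ ih => exact .cons (.refl _) ih
  | swap x y l => exact .swap y x l
  | trans _ _ ih₁ ih₂ => exact .trans ih₁ ih₂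

theorem LEquiv.of_forall₂ {cs cs' : List (ℕ × PreRTM)}
    (h : List.Forall₂ (fun c d => c.1 = d.1 ∧ cls c.2 = cls d.2) cs cs') : LEquiv cs cs' := by
  induction h with
  | nil => exact .nil
  | @cons c d _ _ hcd _ ih =>
    obtain ⟨e, P⟩ := c
    obtain ⟨_, Q⟩ := d
    obtain ⟨rfl, hPQ⟩ := hcd
    exact .cons (cls_eq_cls_iff.1 hPQ) ih

theorem LEquiv.of_childClasses_eq {cs cs' : List (ℕ × PreRTM)}
    (h : ((cs.map fun c => (c.1, cls c.2) : List (ℕ × RTM)) : Multiset (ℕ × RTM)) =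
      (cs'.map fun c => (c.1, cls c.2) : List (ℕ × RTM))) :
    LEquiv cs cs' := by
  -- reorder `cs` so that it matches `cs'` entry by entry
  set f : ℕ × PreRTM → ℕ × RTM := fun c => (c.1, cls c.2)
  have hcomp : Relation.Comp (List.Forall₂ fun c b => f c = b) List.Perm cs (cs'.map f) :=
    ⟨cs.map f, List.forall₂_map_right_iff.2 (List.forall₂_same.2 fun _ _ => rfl),
      Multiset.coe_eq_coe.1 h⟩
  rw [List.forall₂_comp_perm_eq_perm_comp_forall₂] at hcomp
  obtain ⟨ds, hperm, hds⟩ := hcomp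
  refine (LEquiv.of_perm hperm).trans (LEquiv.of_forall₂ ?_)
  exact (List.forall₂_map_right_iff.1 hds).imp fun c d hcd => Prod.ext_iff.1 hcd

theorem cls_eq_cls_iff_loops_childClasses {P Q : PreRTM} :
    cls P = cls Q ↔ P.loops = Q.loops ∧ P.childClasses = Q.childClasses := by
  refine ⟨fun h => ?_, fun h => ?_⟩
  · have hPQ := cls_eq_cls_iff.1 h
    exact ⟨hPQ.loops_eq, hPQ.childClasses_eq⟩
  · obtain ⟨l, cs⟩ := P
    obtain ⟨_, cs'⟩ := Q
    obtain ⟨rfl, hch⟩ := h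
    exact Quot.sound (.node l (LEquiv.of_childClasses_eq hch))

end PreRTM

theorem Multiset.finite_setOf_card_le {α : Type*} {T : Set α} (hT : T.Finite) (k : ℕ) :
    {M : Multiset α | Multiset.card M ≤ k ∧ ∀ x ∈ M, x ∈ T}.Finite := by
  have := hT.to_subtype
  refine ((List.finite_length_le T k).image fun l => (l.map Subtype.val : Multiset α)).subset ?_
  rintro M ⟨hk, hM⟩
  lift M to Multiset T using hM
  exact ⟨M.toList, by simpa using hk, by simp only [← Multiset.map_coe, Multiset.coe_toList]⟩

theorem Multiset.ncard_setOf_card_eq {α : Type*} {A : Set α} (hA : A.Finite) (z : ℕ) :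
    {M : Multiset α | Multiset.card M = z ∧ ∀ x ∈ M, x ∈ A}.ncard = A.ncard.multichoose z := by
  classical
  have := hA.fintype
  have hrange : {M : Multiset α | Multiset.card M = z ∧ ∀ x ∈ M, x ∈ A} =
      Set.range (Multiset.map Subtype.val ∘ Sym.toMultiset (α := A) (n := z)) := by
    ext M
    constructor
    · rintro ⟨hz, hM⟩
      lift M to Multiset A using hM
      exact ⟨⟨M, by simpa using hz⟩, rfl⟩
    · rintro ⟨x, rfl⟩
      refine ⟨by simp, fun _ hy => ?_⟩
      obtain ⟨a, -, rfl⟩ := Multiset.mem_map.1 hy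
      exact a.2
  rw [hrange, Set.ncard_range_of_injective
    ((Multiset.map_injective Subtype.val_injective).comp Sym.coe_injective),
    Nat.card_eq_fintype_card, Sym.card_sym_eq_multichoose, ← Nat.card_eq_fintype_card,
    Nat.card_coe_set_eq]

namespace RTM

def vcount : RTM → ℕ := Quot.lift PreRTM.vcount fun _ _ => PreRTM.REquiv.vcount_eq

def scount : RTM → ℕ := Quot.lift PreRTM.scount fun _ _ => PreRTM.REquiv.scount_eq

def ecount : RTM → ℕ := Quot.lift PreRTM.ecount fun _ _ => PreRTM.REquiv.ecount_eq

def loops : RTM → ℕ := Quot.lift PreRTM.loops fun _ _ => PreRTM.REquiv.loops_eq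

def children : RTM → Multiset (ℕ × RTM) :=
  Quot.lift PreRTM.childClasses fun _ _ => PreRTM.REquiv.childClasses_eq

theorem cls_surjective : Function.Surjective cls :=
  Quot.exists_rep

theorem children_cls (l : ℕ) (cs : List (ℕ × PreRTM)) :
    children (cls (.node l cs)) = (cs.map fun c => (c.1, cls c.2) : List (ℕ × RTM)) :=
  rfl

theorem vcount_eq (q : RTM) : vcount q = 1 + ((children q).map fun c => vcount c.2).sum := by
  obtain ⟨⟨l, cs⟩, rfl⟩ := cls_surjective q
  rw [children_cls, Multiset.map_coe, List.map_map, Multiset.sum_coe]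
  exact PreRTM.vcount_node l cs

theorem scount_eq (q : RTM) :
    scount q = loops q + ((children q).map fun c => scount c.2).sum := by
  obtain ⟨⟨l, cs⟩, rfl⟩ := cls_surjective q
  rw [children_cls, Multiset.map_coe, List.map_map, Multiset.sum_coe]
  exact PreRTM.scount_node l cs

theorem ecount_eq (q : RTM) : ecount q = ((children q).map fun c => c.1 + ecount c.2).sum := by
  obtain ⟨⟨l, cs⟩, rfl⟩ := cls_surjective q
  rw [children_cls, Multiset.map_coe, List.map_map, Multiset.sum_coe]
  exact PreRTM.ecount_node l cs

theorem ext {q q' : RTM} (hl : loops q = loops q') (hc : children q = children q') : q = q' := by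
  obtain ⟨P, rfl⟩ := cls_surjective q
  obtain ⟨P', rfl⟩ := cls_surjective q'
  exact PreRTM.cls_eq_cls_iff_loops_childClasses.2 ⟨hl, hc⟩

noncomputable def node (l : ℕ) (C : Multiset (ℕ × RTM)) : RTM :=
  cls (.node l (C.toList.map fun c => (c.1, c.2.out)))

@[simp] theorem loops_node (l : ℕ) (C : Multiset (ℕ × RTM)) : loops (node l C) = l := rfl

@[simp] theorem children_node (l : ℕ) (C : Multiset (ℕ × RTM)) : children (node l C) = C := by
  rw [node, children_cls, List.map_map]
  conv_rhs => rw [← Multiset.coe_toList C, ← List.map_id C.toList]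
  congr 2
  funext c
  exact Prod.ext rfl (Quot.out_eq c.2)

def maxV (q : RTM) : ℕ := ((children q).map fun c => vcount c.2).sup

def maxS (q : RTM) : ℕ :=
  (((children q).filter fun c => vcount c.2 = maxV q).map fun c => scount c.2).sup

def maxM (q : RTM) : ℕ :=
  (((children q).filter fun c => vcount c.2 = maxV q).map fun c => ecount c.2).sup

def maxL (q : RTM) : ℕ :=
  (((children q).filter fun c => vcount c.2 = maxV q ∧ ecount c.2 = maxM q).map Prod.fst).sup

theorem maxV_cls (P : PreRTM) : maxV (cls P) = P.maxV := by
  obtain ⟨l, cs⟩ := P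
  rw [maxV, children_cls, Multiset.map_coe, List.map_map, Multiset.sup_coe]
  rfl

theorem maxS_cls (P : PreRTM) : maxS (cls P) = P.maxS := by
  obtain ⟨l, cs⟩ := P
  rw [maxS, maxV_cls, children_cls, Multiset.filter_coe, Multiset.map_coe, Multiset.sup_coe,
    List.filter_map, List.map_map]
  rfl

theorem maxM_cls (P : PreRTM) : maxM (cls P) = P.maxM := by
  obtain ⟨l, cs⟩ := P
  rw [maxM, maxV_cls, children_cls, Multiset.filter_coe, Multiset.map_coe, Multiset.sup_coe,
    List.filter_map, List.map_map]
  rfl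

theorem maxL_cls (P : PreRTM) : maxL (cls P) = P.maxL := by
  obtain ⟨l, cs⟩ := P
  rw [maxL, maxV_cls, maxM_cls, children_cls, Multiset.filter_coe, Multiset.map_coe,
    Multiset.sup_coe, List.filter_map, List.map_map]
  simp only [Function.comp_def, Bool.decide_and]
  rfl

theorem mem_famLLLL_iff {n s m f g h k : ℤ} {q : RTM} :
    q ∈ famLLLL n s m f g h k ↔
      (vcount q : ℤ) = n ∧ (scount q : ℤ) = s ∧ (ecount q : ℤ) = m ∧
        (maxV q : ℤ) ≤ f ∧ (maxS q : ℤ) ≤ g ∧ (maxM q : ℤ) ≤ h ∧ (maxL q : ℤ) ≤ k := by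
  constructor
  · rintro ⟨P, ⟨⟨h₁, h₂, h₃⟩, h₄, h₅, h₆, h₇⟩, rfl⟩
    rw [maxV_cls, maxS_cls, maxM_cls, maxL_cls]
    exact ⟨h₁, h₂, h₃, h₄, h₅, h₆, h₇⟩
  · obtain ⟨P, rfl⟩ := cls_surjective q
    rw [maxV_cls, maxS_cls, maxM_cls, maxL_cls]
    rintro ⟨h₁, h₂, h₃, h₄, h₅, h₆, h₇⟩
    exact ⟨P, ⟨⟨h₁, h₂, h₃⟩, h₄, h₅, h₆, h₇⟩, rfl⟩

theorem mem_famEEEE_iff {n s m f g h k : ℤ} {q : RTM} :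
    q ∈ famEEEE n s m f g h k ↔
      (vcount q : ℤ) = n ∧ (scount q : ℤ) = s ∧ (ecount q : ℤ) = m ∧
        (maxV q : ℤ) = f ∧ (maxS q : ℤ) = g ∧ (maxM q : ℤ) = h ∧ (maxL q : ℤ) = k := by
  constructor
  · rintro ⟨P, ⟨⟨⟨⟨⟨⟨h₁, h₂, h₃⟩, -⟩, h₄⟩, h₅⟩, h₆⟩, h₇⟩, rfl⟩
    rw [maxV_cls, maxS_cls, maxM_cls, maxL_cls]
    exact ⟨h₁, h₂, h₃, h₄, h₅, h₆, h₇⟩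
  · obtain ⟨P, rfl⟩ := cls_surjective q
    rw [maxV_cls, maxS_cls, maxM_cls, maxL_cls]
    rintro ⟨h₁, h₂, h₃, h₄, h₅, h₆, h₇⟩
    exact ⟨P, ⟨⟨⟨⟨⟨⟨h₁, h₂, h₃⟩, h₄.le, h₅.le, h₆.le, h₇.le⟩, h₄⟩, h₅⟩, h₆⟩, h₇⟩, rfl⟩

theorem vcount_lt_of_mem_children {q : RTM} {c : ℕ × RTM} (hc : c ∈ children q) :
    vcount c.2 < vcount q := by
  have := Multiset.le_sum_of_mem (Multiset.mem_map_of_mem (fun c => vcount c.2) hc)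
  rw [vcount_eq q]
  omega

theorem scount_le_of_mem_children {q : RTM} {c : ℕ × RTM} (hc : c ∈ children q) :
    scount c.2 ≤ scount q := by
  have := Multiset.le_sum_of_mem (Multiset.mem_map_of_mem (fun c => scount c.2) hc)
  rw [scount_eq q]
  omega

theorem ecount_le_of_mem_children {q : RTM} {c : ℕ × RTM} (hc : c ∈ children q) :
    c.1 + ecount c.2 ≤ ecount q := by
  rw [ecount_eq q]
  exact Multiset.le_sum_of_mem (Multiset.mem_map_of_mem (fun c => c.1 + ecount c.2) hc)

theorem loops_le_scount (q : RTM) : loops q ≤ scount q := by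
  rw [scount_eq q]
  omega

theorem card_children_lt_vcount (q : RTM) : Multiset.card (children q) < vcount q := by
  have hpos : ∀ c ∈ children q, 1 ≤ vcount c.2 := fun c _ => by rw [vcount_eq]; omega
  have := Multiset.card_nsmul_le_sum (s := (children q).map fun c => vcount c.2)
    (a := 1) fun _ hx => by
      obtain ⟨c, hc, rfl⟩ := Multiset.mem_map.1 hx
      exact hpos c hc
  rw [vcount_eq q]
  simp only [Multiset.card_map, smul_eq_mul, mul_one] at this
  omega

theorem vcount_le_maxV {q : RTM} {c : ℕ × RTM} (hc : c ∈ children q) : vcount c.2 ≤ maxV q :=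
  Multiset.le_sup (Multiset.mem_map_of_mem (fun c => vcount c.2) hc)

theorem maxV_lt_vcount (q : RTM) : maxV q < vcount q := by
  have hle : maxV q ≤ vcount q - 1 := by
    refine Multiset.sup_le.2 ?_
    simp only [Multiset.mem_map]
    rintro _ ⟨c, hc, rfl⟩
    have := vcount_lt_of_mem_children hc
    omega
  have := card_children_lt_vcount q
  omega

theorem maxS_le_scount (q : RTM) : maxS q ≤ scount q := by
  refine Multiset.sup_le.2 ?_
  simp only [Multiset.mem_map, Multiset.mem_filter]
  rintro _ ⟨c, ⟨hc, -⟩, rfl⟩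
  exact scount_le_of_mem_children hc

theorem maxM_le_ecount (q : RTM) : maxM q ≤ ecount q := by
  refine Multiset.sup_le.2 ?_
  simp only [Multiset.mem_map, Multiset.mem_filter]
  rintro _ ⟨c, ⟨hc, -⟩, rfl⟩
  have := ecount_le_of_mem_children hc
  omega

theorem maxL_le_ecount (q : RTM) : maxL q ≤ ecount q := by
  refine Multiset.sup_le.2 ?_
  simp only [Multiset.mem_map, Multiset.mem_filter]
  rintro _ ⟨c, ⟨hc, -⟩, rfl⟩
  have := ecount_le_of_mem_children hc
  omega

theorem mem_famLLLL_iff_maxV_le {n s m F : ℤ} {q : RTM} :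
    q ∈ famLLLL n s m F s m m ↔
      (vcount q : ℤ) = n ∧ (scount q : ℤ) = s ∧ (ecount q : ℤ) = m ∧ (maxV q : ℤ) ≤ F := by
  have := maxS_le_scount q
  have := maxM_le_ecount q
  have := maxL_le_ecount q
  rw [mem_famLLLL_iff]
  omega

theorem mem_famLLLL_pred_iff {n s m : ℤ} {q : RTM} :
    q ∈ famLLLL n s m (n - 1) s m m ↔
      (vcount q : ℤ) = n ∧ (scount q : ℤ) = s ∧ (ecount q : ℤ) = m := by
  have := maxV_lt_vcount q
  rw [mem_famLLLL_iff_maxV_le]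
  omega

theorem mem_famLLLL_min_iff {n s m F : ℤ} {q : RTM} :
    q ∈ famLLLL n s m (min (n - 1) F) s m m ↔
      (vcount q : ℤ) = n ∧ (scount q : ℤ) = s ∧ (ecount q : ℤ) = m ∧ (maxV q : ℤ) ≤ F := by
  have := maxV_lt_vcount q
  rw [mem_famLLLL_iff_maxV_le, le_min_iff]
  omega

theorem node_loops_children (q : RTM) : node (loops q) (children q) = q :=
  ext (loops_node _ _) (children_node _ _)

theorem finite_setOf_vcount_le (N S E : ℕ) :
    {q : RTM | vcount q ≤ N ∧ scount q ≤ S ∧ ecount q ≤ E}.Finite := by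
  induction N with
  | zero =>
    refine Set.finite_empty.subset fun q ⟨hv, _⟩ => ?_
    have := card_children_lt_vcount q
    omega
  | succ N ih =>
    refine (((Set.finite_Iic S).prod (Multiset.finite_setOf_card_le
      ((Set.finite_Iic E).prod ih) N)).image fun p => node p.1 p.2).subset ?_
    rintro q ⟨hv, hs, he⟩
    refine ⟨(loops q, children q), ⟨?_, ?_, fun c hc => ?_⟩, node_loops_children q⟩
    · exact (loops_le_scount q).trans hs
    · have := card_children_lt_vcount q
      show Multiset.card (children q) ≤ N
      omega
    · have := vcount_lt_of_mem_children hc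
      have := scount_le_of_mem_children hc
      have := ecount_le_of_mem_children hc
      exact ⟨Set.mem_Iic.2 (by omega), by omega, by omega, by omega⟩

theorem famLLLL_finite (n s m f g h k : ℤ) : (famLLLL n s m f g h k).Finite := by
  refine (finite_setOf_vcount_le n.toNat s.toNat m.toNat).subset fun q hq => ?_
  rw [mem_famLLLL_iff] at hq
  refine ⟨?_, ?_, ?_⟩ <;> omega

theorem famEEEE_finite (n s m f g h k : ℤ) : (famEEEE n s m f g h k).Finite :=
  (famLLLL_finite n s m f g h k).subset (Set.image_mono fun _ hP => hP.1.1.1.1)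

/-- Attach every tree of `M` to the root of `r` by a simple edge. -/
noncomputable def graft (M : Multiset RTM) (r : RTM) : RTM :=
  node (loops r) (M.map ((0, ·)) + children r)

def subtreesOfSize (a : ℕ) (q : RTM) : Multiset RTM :=
  ((children q).filter fun c => vcount c.2 = a).map Prod.snd

noncomputable def pruneOfSize (a : ℕ) (q : RTM) : RTM :=
  node (loops q) ((children q).filter fun c => vcount c.2 ≠ a)

section Graft

variable {a : ℕ} {M : Multiset RTM} {r : RTM}

@[simp] theorem loops_graft : loops (graft M r) = loops r := loops_node _ _

@[simp] theorem children_graft : children (graft M r) = M.map ((0, ·)) + children r :=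
  children_node _ _

theorem vcount_graft : vcount (graft M r) = vcount r + (M.map vcount).sum := by
  rw [vcount_eq (graft M r), vcount_eq r, children_graft, Multiset.map_add, Multiset.sum_add,
    Multiset.map_map]
  simp only [Function.comp_def]
  ring

theorem scount_graft : scount (graft M r) = scount r + (M.map scount).sum := by
  rw [scount_eq (graft M r), scount_eq r, loops_graft, children_graft, Multiset.map_add,
    Multiset.sum_add, Multiset.map_map]
  simp only [Function.comp_def]
  ring

theorem ecount_graft : ecount (graft M r) = ecount r + (M.map ecount).sum := by
  rw [ecount_eq (graft M r), ecount_eq r, children_graft, Multiset.map_add, Multiset.sum_add,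
    Multiset.map_map]
  simp only [Function.comp_def, zero_add]
  ring

theorem filter_children_graft_eq (hM : ∀ x ∈ M, vcount x = a) (hr : maxV r < a) :
    (children (graft M r)).filter (fun c => vcount c.2 = a) = M.map ((0, ·)) := by
  have hM' : (M.map ((0, ·))).filter (fun c => vcount c.2 = a) = M.map ((0, ·)) :=
    Multiset.filter_eq_self.2 fun _ hc => by
      obtain ⟨x, hx, rfl⟩ := Multiset.mem_map.1 hc
      exact hM x hx
  have hr' : (children r).filter (fun c => vcount c.2 = a) = 0 :=
    Multiset.filter_eq_nil.2 fun _ hc => ((vcount_le_maxV hc).trans_lt hr).ne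
  rw [children_graft, Multiset.filter_add, hM', hr', add_zero]

theorem filter_children_graft_ne (hM : ∀ x ∈ M, vcount x = a) (hr : maxV r < a) :
    (children (graft M r)).filter (fun c => vcount c.2 ≠ a) = children r := by
  have hM' : (M.map ((0, ·))).filter (fun c => vcount c.2 ≠ a) = 0 :=
    Multiset.filter_eq_nil.2 fun _ hc => by
      obtain ⟨x, hx, rfl⟩ := Multiset.mem_map.1 hc
      exact not_not.2 (hM x hx)
  have hr' : (children r).filter (fun c => vcount c.2 ≠ a) = children r :=
    Multiset.filter_eq_self.2 fun _ hc => ((vcount_le_maxV hc).trans_lt hr).ne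
  rw [children_graft, Multiset.filter_add, hM', hr', zero_add]

theorem subtreesOfSize_graft (hM : ∀ x ∈ M, vcount x = a) (hr : maxV r < a) :
    subtreesOfSize a (graft M r) = M := by
  rw [subtreesOfSize, filter_children_graft_eq hM hr, Multiset.map_map]
  exact Multiset.map_id' M

theorem pruneOfSize_graft (hM : ∀ x ∈ M, vcount x = a) (hr : maxV r < a) :
    pruneOfSize a (graft M r) = r :=
  ext (loops_node _ _) (by rw [pruneOfSize, children_node, filter_children_graft_ne hM hr])

theorem maxV_graft (hM : ∀ x ∈ M, vcount x = a) (hr : maxV r < a) (hM0 : M ≠ 0) :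
    maxV (graft M r) = a := by
  obtain ⟨x, hx⟩ := Multiset.exists_mem_of_ne_zero hM0
  refine le_antisymm (Multiset.sup_le.2 ?_) ?_
  · rw [children_graft, Multiset.map_add]
    simp only [Multiset.mem_add, Multiset.mem_map]
    rintro _ (⟨_, ⟨y, hy, rfl⟩, rfl⟩ | ⟨c, hc, rfl⟩)
    · exact (hM y hy).le
    · exact ((vcount_le_maxV hc).trans_lt hr).le
  · rw [← hM x hx]
    refine Multiset.le_sup (Multiset.mem_map.2 ⟨(0, x), ?_, rfl⟩)
    simpa using Or.inl hx

theorem maxS_graft (hM : ∀ x ∈ M, vcount x = a) (hr : maxV r < a) (hM0 : M ≠ 0) :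
    maxS (graft M r) = (M.map scount).sup := by
  rw [maxS, maxV_graft hM hr hM0, filter_children_graft_eq hM hr, Multiset.map_map]
  rfl

theorem maxM_graft (hM : ∀ x ∈ M, vcount x = a) (hr : maxV r < a) (hM0 : M ≠ 0) :
    maxM (graft M r) = (M.map ecount).sup := by
  rw [maxM, maxV_graft hM hr hM0, filter_children_graft_eq hM hr, Multiset.map_map]
  rfl

theorem maxL_graft (hM : ∀ x ∈ M, vcount x = a) (hr : maxV r < a) (hM0 : M ≠ 0) :
    maxL (graft M r) = 0 := by
  refine Nat.eq_zero_of_le_zero (Multiset.sup_le.2 ?_)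
  simp only [Multiset.mem_map, Multiset.mem_filter]
  rintro _ ⟨c, ⟨hc, hv, -⟩, rfl⟩
  rw [maxV_graft hM hr hM0] at hv
  have : c ∈ M.map ((0, ·)) := filter_children_graft_eq hM hr ▸ Multiset.mem_filter.2 ⟨hc, hv⟩
  obtain ⟨x, -, rfl⟩ := Multiset.mem_map.1 this
  rfl

end Graft

section Decomposition

variable {a : ℕ} {q : RTM}

theorem vcount_of_mem_subtreesOfSize {x : RTM} (hx : x ∈ subtreesOfSize a q) : vcount x = a := by
  obtain ⟨c, hc, rfl⟩ := Multiset.mem_map.1 hx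
  exact (Multiset.mem_filter.1 hc).2

theorem graft_subtreesOfSize_pruneOfSize (h : ∀ c ∈ children q, vcount c.2 = a → c.1 = 0) :
    graft (subtreesOfSize a q) (pruneOfSize a q) = q := by
  refine ext rfl ?_
  rw [children_graft, pruneOfSize, children_node, subtreesOfSize, Multiset.map_map]
  conv_rhs => rw [← Multiset.filter_add_not (fun c => vcount c.2 = a) (children q)]
  congr 1
  conv_rhs => rw [← Multiset.map_id ((children q).filter _)]
  refine Multiset.map_congr rfl fun c hc => ?_
  obtain ⟨hc, hv⟩ := Multiset.mem_filter.1 hc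
  exact Prod.ext (h c hc hv).symm rfl

theorem maxV_pruneOfSize_lt (ha : 1 ≤ a) (hq : maxV q ≤ a) : maxV (pruneOfSize a q) < a := by
  have : maxV (pruneOfSize a q) ≤ a - 1 := by
    refine Multiset.sup_le.2 ?_
    rw [pruneOfSize, children_node]
    simp only [Multiset.mem_map, Multiset.mem_filter]
    rintro _ ⟨c, ⟨hc, hne⟩, rfl⟩
    have := (vcount_le_maxV hc).trans hq
    omega
  omega

theorem subtreesOfSize_ne_zero (ha : 1 ≤ a) (hq : maxV q = a) : subtreesOfSize a q ≠ 0 := by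
  intro h0
  have hne : ∀ c ∈ children q, vcount c.2 ≠ a := fun c hc hv => by
    have : c.2 ∈ subtreesOfSize a q := Multiset.mem_map_of_mem _ (Multiset.mem_filter.2 ⟨hc, hv⟩)
    simp [h0] at this
  have : maxV q ≤ a - 1 := by
    refine Multiset.sup_le.2 ?_
    simp only [Multiset.mem_map]
    rintro _ ⟨c, hc, rfl⟩
    have := vcount_le_maxV hc
    have := hne c hc
    omega
  omega

theorem fst_eq_zero_of_maxL_eq_zero (hm : maxM q = 0) (hl : maxL q = 0) {c : ℕ × RTM}
    (hc : c ∈ children q) (hv : vcount c.2 = maxV q) : c.1 = 0 := by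
  have he : ecount c.2 ≤ maxM q :=
    Multiset.le_sup (Multiset.mem_map_of_mem (fun c => ecount c.2) (Multiset.mem_filter.2 ⟨hc, hv⟩))
  have : c.1 ≤ maxL q :=
    Multiset.le_sup (Multiset.mem_map_of_mem Prod.fst (Multiset.mem_filter.2 ⟨hc, hv, by omega⟩))
  omega

theorem graft_mem_famEEEE_iff {n s m : ℤ} {M : Multiset RTM} {r : RTM}
    (hM : ∀ x ∈ M, vcount x = a) (hr : maxV r < a) (hM0 : M ≠ 0) :
    graft M r ∈ famEEEE n s m a 0 0 0 ↔
      (vcount r : ℤ) + Multiset.card M * a = n ∧ (scount r : ℤ) = s ∧ (ecount r : ℤ) = m ∧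
        ∀ x ∈ M, scount x = 0 ∧ ecount x = 0 := by
  have hv : (M.map vcount).sum = Multiset.card M * a := by
    rw [Multiset.map_congr rfl hM, Multiset.map_const', Multiset.sum_replicate, smul_eq_mul]
  have hsup : ∀ φ : RTM → ℕ, (M.map φ).sup = 0 ↔ ∀ x ∈ M, φ x = 0 := by
    intro φ
    simp only [← Nat.le_zero, Multiset.sup_le, Multiset.forall_mem_map_iff]
  have hsum : ∀ φ : RTM → ℕ, (M.map φ).sum = 0 ↔ ∀ x ∈ M, φ x = 0 := by
    intro φ
    simp only [Multiset.sum_eq_zero_iff, Multiset.forall_mem_map_iff]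
  rw [mem_famEEEE_iff, vcount_graft, scount_graft, ecount_graft, maxV_graft hM hr hM0,
    maxS_graft hM hr hM0, maxM_graft hM hr hM0, maxL_graft hM hr hM0, hv]
  constructor
  · rintro ⟨h₁, h₂, h₃, -, h₅, h₆, -⟩
    have hs := (hsup scount).1 (by exact_mod_cast h₅)
    have he := (hsup ecount).1 (by exact_mod_cast h₆)
    rw [(hsum scount).2 hs] at h₂
    rw [(hsum ecount).2 he] at h₃
    push_cast at h₁ h₂ h₃
    exact ⟨h₁, h₂, h₃, fun x hx => ⟨hs x hx, he x hx⟩⟩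
  · rintro ⟨h₁, h₂, h₃, h₄⟩
    rw [(hsum scount).2 fun x hx => (h₄ x hx).1, (hsum ecount).2 fun x hx => (h₄ x hx).2,
      (hsup scount).2 fun x hx => (h₄ x hx).1, (hsup ecount).2 fun x hx => (h₄ x hx).2]
    exact ⟨by push_cast; exact h₁, by simpa using h₂, by simpa using h₃, rfl, rfl, rfl, rfl⟩

theorem mem_famEEEE_decompose {n s m : ℤ} (ha : 1 ≤ a)
    (hq : q ∈ famEEEE n s m a 0 0 0) :
    graft (subtreesOfSize a q) (pruneOfSize a q) = q ∧ subtreesOfSize a q ≠ 0 ∧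
      (∀ x ∈ subtreesOfSize a q, x ∈ famLLLL a 0 0 (a - 1) 0 0 0) ∧
      pruneOfSize a q ∈ famLLLL (n - Multiset.card (subtreesOfSize a q) * a) s m
        (min (n - Multiset.card (subtreesOfSize a q) * a - 1) (a - 1)) s m m := by
  obtain ⟨-, -, -, hv, -, hm, hl⟩ := mem_famEEEE_iff.1 hq
  have hv : maxV q = a := by exact_mod_cast hv
  have hgraft := graft_subtreesOfSize_pruneOfSize fun c hc hca =>
    fst_eq_zero_of_maxL_eq_zero (by exact_mod_cast hm) (by exact_mod_cast hl) hc (hca.trans hv.symm)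
  have hM : ∀ x ∈ subtreesOfSize a q, vcount x = a := fun _ => vcount_of_mem_subtreesOfSize
  have hr := maxV_pruneOfSize_lt ha hv.le
  have hM0 := subtreesOfSize_ne_zero ha hv
  rw [← hgraft, graft_mem_famEEEE_iff hM hr hM0] at hq
  obtain ⟨hvr, hsr, her, hM'⟩ := hq
  refine ⟨hgraft, hM0, fun x hx => mem_famLLLL_pred_iff.2 ?_, mem_famLLLL_min_iff.2 ?_⟩
  · simp [hM x hx, hM' x hx]
  · exact ⟨by omega, hsr, her, by omega⟩

theorem bijOn_graft {n s m y : ℤ} (ha : 1 ≤ a) (hy : 1 ≤ y) :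
    Set.BijOn (fun p => graft p.1 p.2)
      ({M | Multiset.card M = y.toNat ∧ ∀ x ∈ M, x ∈ famLLLL a 0 0 (a - 1) 0 0 0} ×ˢ
        famLLLL (n - y * a) s m (min (n - y * a - 1) (a - 1)) s m m)
      {q ∈ famEEEE n s m a 0 0 0 | (Multiset.card (subtreesOfSize a q) : ℤ) = y} := by
  have graftable : ∀ {M : Multiset RTM} {r : RTM}, (∀ x ∈ M, x ∈ famLLLL a 0 0 (a - 1) 0 0 0) →
      r ∈ famLLLL (n - y * a) s m (min (n - y * a - 1) (a - 1)) s m m →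
      (∀ x ∈ M, vcount x = a) ∧ maxV r < a := fun hM hr => by
    refine ⟨fun x hx => ?_, ?_⟩
    · have := (mem_famLLLL_pred_iff.1 (hM x hx)).1
      omega
    · have := (mem_famLLLL_min_iff.1 hr).2.2.2
      omega
  refine ⟨?_, ?_, ?_⟩
  · rintro ⟨M, r⟩ ⟨⟨hcard, hMA⟩, hrB⟩
    dsimp only at hcard hMA hrB ⊢
    obtain ⟨hM, hr⟩ := graftable hMA hrB
    have hcard' : (Multiset.card M : ℤ) = y := by omega
    have hM0 : M ≠ 0 := by
      rintro rfl
      simp only [Multiset.card_zero, Nat.cast_zero] at hcard'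
      omega
    obtain ⟨hvr, hsr, her, -⟩ := mem_famLLLL_min_iff.1 hrB
    refine ⟨(graft_mem_famEEEE_iff hM hr hM0).2 ⟨by rw [hcard']; omega, hsr, her, fun x hx => ?_⟩,
      by rw [subtreesOfSize_graft hM hr, hcard']⟩
    obtain ⟨-, hs, he⟩ := mem_famLLLL_pred_iff.1 (hMA x hx)
    exact ⟨by exact_mod_cast hs, by exact_mod_cast he⟩
  · rintro ⟨M, r⟩ ⟨⟨-, hMA⟩, hrB⟩ ⟨M', r'⟩ ⟨⟨-, hMA'⟩, hrB'⟩ h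
    dsimp only at hMA hrB hMA' hrB' h
    obtain ⟨hM, hr⟩ := graftable hMA hrB
    obtain ⟨hM', hr'⟩ := graftable hMA' hrB'
    rw [Prod.mk.injEq, ← subtreesOfSize_graft hM hr, h, subtreesOfSize_graft hM' hr',
      ← pruneOfSize_graft hM hr, h, pruneOfSize_graft hM' hr']
    exact ⟨rfl, rfl⟩
  · rintro q ⟨hq, rfl⟩
    obtain ⟨hgraft, -, hM, hr⟩ := mem_famEEEE_decompose ha hq
    exact ⟨(_, _), ⟨⟨(Int.toNat_natCast _).symm, hM⟩, hr⟩, hgraft⟩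

theorem card_subtreesOfSize_mem_Yset {n s m : ℤ} (ha : 1 ≤ a)
    (hq : q ∈ famEEEE n s m a 0 0 0) :
    (Multiset.card (subtreesOfSize a q) : ℤ) ∈ Yset n s m a 0 0 0 := by
  obtain ⟨-, hM0, -, hr⟩ := mem_famEEEE_decompose ha hq
  have hcard := Multiset.card_pos.2 hM0
  have := (mem_famLLLL_min_iff.1 hr).1
  have := maxV_lt_vcount (pruneOfSize a q)
  simp only [Yset, Finset.mem_filter, Finset.mem_Icc]
  refine ⟨⟨by omega, (Int.le_ediv_iff_mul_le (by omega)).2 (by omega)⟩, by omega, by omega⟩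

end Decomposition

end RTM

open RTM in
/-- Paper's Lemma 2(i): recursion for `p(n,s,m,f=,0=,0=,0=)`. -/
theorem lemma2_i (n s m f : ℤ) (hn : 3 ≤ n) (hf : 1 ≤ f) (hs : 0 ≤ s) (hm : 0 ≤ m) :
    pEEEE n s m f 0 0 0 =
      ∑ y ∈ Yset n s m f 0 0 0,
        w f 0 0 y.toNat *
          pLLLL (n - y*f) s m (min (n - y*f - 1) (f-1)) s m m := by
  classical
  lift f to ℕ using by omega
  have ha : 1 ≤ f := by exact_mod_cast hf
  have hfin := famEEEE_finite n s m f 0 0 0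
  rw [pEEEE, Set.ncard_eq_toFinset_card _ hfin,
    Finset.card_eq_sum_card_fiberwise fun q hq => card_subtreesOfSize_mem_Yset ha
      (hfin.mem_toFinset.1 hq)]
  refine Finset.sum_congr rfl fun y hy => ?_
  have hy : 1 ≤ y := (Finset.mem_Icc.1 (Finset.mem_filter.1 hy).1).1
  rw [← Set.ncard_coe_finset, Finset.coe_filter]
  simp only [Set.Finite.mem_toFinset]
  rw [← (bijOn_graft ha hy).ncard_eq, Set.ncard_prod,
    Multiset.ncard_setOf_card_eq (famLLLL_finite _ _ _ _ _ _ _), Nat.multichoose_eq]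
  rfl
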